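/- arXiv:2112.07324 — 4 statements merged into one kernel-verified Lean document; each statement's English description precedes it below -/
import Mathlib

section
/- Fix a unit vector η ∈ ℝ^m, a nonzero weight vector w ∈ ℝ^m, ε ≥ 0, mixture weights p_1, …, p_K > 0 with Σ_k p_k = 1, and parameters r_1, …, r_K > 0. Draw (x, y) as follows: select component k with probability p_k, select y uniformly from {−1, +1}, and set x = r_k y η + z with z ∼ N(0, I_m). Then the robust 0-1 classification error of the linear classifier sign(wᵀ·) under the ℓ2 adversarial budget of size ε, i.e. the probability that inf_{‖Δ‖₂≤ε} y wᵀ(x + Δ) < 0, equals Σ_{k=1}^K p_k Φ( r_k wᵀη/‖w‖₂ − ε ), where Φ(u) = P(Z > u) for Z ∼ N(0,1). -/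
open MeasureTheory
open scoped RealInnerProductSpace ENNReal

/-- The standard Gaussian measure on `ℝ^m` (i.i.d. `N(0,1)` coordinates). -/
noncomputable def stdGaussian (m : ℕ) : Measure (EuclideanSpace ℝ (Fin m)) :=
  (Measure.pi fun _ : Fin m => ProbabilityTheory.gaussianReal 0 1).map
    (MeasurableEquiv.toLp 2 (Fin m → ℝ))

/-- The `K`-mode Gaussian mixture model on pairs `(x, y)`: component `k` is selected with
probability `p k`, the label `y` is uniform on `{−1, +1}`, and `x = r_k y η + z` with
`z ∼ N(0, I_m)`. -/
noncomputable def gmmMixture (m K : ℕ) (η : EuclideanSpace ℝ (Fin m))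
    (p rr : Fin K → ℝ) : Measure (EuclideanSpace ℝ (Fin m) × ℝ) :=
  ∑ k : Fin K, ENNReal.ofReal (p k) •
    ((2 : ℝ≥0∞)⁻¹ • (stdGaussian m).map (fun z => (rr k • η + z, (1 : ℝ))) +
     (2 : ℝ≥0∞)⁻¹ • (stdGaussian m).map (fun z => ((-rr k) • η + z, (-1 : ℝ))))


private lemma lintegral_fin_pi_prod : ∀ {n : ℕ} (μ : Fin n → Measure ℝ),
    (∀ i, SigmaFinite (μ i)) → ∀ (f : Fin n → ℝ → ℝ≥0∞), (∀ i, Measurable (f i)) →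
    ∫⁻ x, ∏ i, f i (x i) ∂Measure.pi μ = ∏ i, ∫⁻ t, f i t ∂μ i := by
  intro n
  induction n with
  | zero => intro μ _ f _; simp
  | succ n ih =>
    intro μ hσ f hf
    haveI := hσ
    have h := measurePreserving_piFinSuccAbove μ 0
    have key : ∫⁻ z, f 0 z.1 * ∏ j : Fin n, f j.succ (z.2 j)
        ∂((μ 0).prod (Measure.pi fun j => μ ((0 : Fin (n+1)).succAbove j)))
        = ∫⁻ x, ∏ i, f i (x i) ∂Measure.pi μ := by
      rw [h.lintegral_map_equiv (fun z => f 0 z.1 * ∏ j : Fin n, f j.succ (z.2 j)) _]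
      congr 1; funext x
      rw [Fin.prod_univ_succ]
      simp [Fin.removeNth, Fin.zero_succAbove, Fin.tail]
    have hmul := lintegral_prod_mul (μ := μ 0)
      (ν := Measure.pi fun j : Fin n => μ ((0 : Fin (n+1)).succAbove j))
      (f := f 0) (g := fun y : Fin n → ℝ => ∏ j : Fin n, f j.succ (y j))
      (hf 0).aemeasurable
      (Finset.measurable_prod Finset.univ
        (fun j _ => (hf j.succ).comp (measurable_pi_apply j))).aemeasurable
    rw [← key, hmul, ih _ (fun j => inferInstance) _ (fun j => hf j.succ), Fin.prod_univ_succ]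
    simp [Fin.zero_succAbove]

private lemma pi_withDensity_fin {n : ℕ} (f : ℝ → ℝ≥0∞) [SigmaFinite ((volume : Measure ℝ).withDensity f)] (hf : Measurable f) :
    (Measure.pi fun _ : Fin n => (volume : Measure ℝ).withDensity f) =
      (Measure.pi fun _ : Fin n => (volume : Measure ℝ)).withDensity
        (fun x => ∏ i, f (x i)) := by
  refine Measure.pi_eq (μ := fun _ : Fin n => (volume : Measure ℝ).withDensity f) fun s hs => ?_
  rw [withDensity_apply _ (MeasurableSet.univ_pi hs),
    ← lintegral_indicator (MeasurableSet.univ_pi hs)]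
  have hind : (Set.indicator (Set.univ.pi s) fun x : Fin n → ℝ => ∏ i, f (x i)) =
      fun x => ∏ i, (s i).indicator f (x i) := by
    funext x
    by_cases hx : x ∈ Set.univ.pi s
    · rw [Set.indicator_of_mem hx]
      exact Finset.prod_congr rfl fun i _ =>
        (Set.indicator_of_mem (hx i (Set.mem_univ i)) f).symm
    · rw [Set.indicator_of_notMem hx]
      have : ¬ ∀ i, x i ∈ s i := fun h => hx (Set.mem_univ_pi.mpr h)
      push_neg at this
      obtain ⟨i, hi⟩ := this
      exact (Finset.prod_eq_zero (Finset.mem_univ i)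
        (Set.indicator_of_notMem hi f)).symm
  rw [hind, lintegral_fin_pi_prod _ (fun _ => inferInstance) _
    (fun i => hf.indicator (hs i))]
  exact Finset.prod_congr rfl fun i _ => by
    rw [lintegral_indicator (hs i), withDensity_apply _ (hs i)]

private lemma map_withDensity_equiv {α β : Type*} [MeasurableSpace α] [MeasurableSpace β]
    (e : α ≃ᵐ β) (μ : Measure α) (g : α → ℝ≥0∞) (hg : Measurable g) :
    (μ.withDensity g).map e = (μ.map e).withDensity (g ∘ e.symm) := by
  ext s hs
  rw [Measure.map_apply e.measurable hs, withDensity_apply _ (e.measurable hs),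
    withDensity_apply _ hs,
    setLIntegral_map hs (hg.comp e.symm.measurable) e.measurable]
  refine setLIntegral_congr_fun (e.measurable hs) (fun x _ => ?_)
  simp

private noncomputable def gaussDens (m : ℕ) (t : ℝ) : ℝ≥0∞ :=
  ENNReal.ofReal ((Real.sqrt (2 * Real.pi))⁻¹ ^ m * Real.exp (-t ^ 2 / 2))

private lemma measurable_gaussDens (m : ℕ) : Measurable (gaussDens m) := by
  unfold gaussDens
  fun_prop

private lemma stdGaussian_eq_withDensity (m : ℕ) :
    stdGaussian m = (volume : Measure (EuclideanSpace ℝ (Fin m))).withDensity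
      (fun x => gaussDens m ‖x‖) := by
  have h1 : ProbabilityTheory.gaussianReal 0 1 =
      (volume : Measure ℝ).withDensity (ProbabilityTheory.gaussianPDF 0 1) :=
    ProbabilityTheory.gaussianReal_of_var_ne_zero 0 one_ne_zero
  haveI : SigmaFinite ((volume : Measure ℝ).withDensity (ProbabilityTheory.gaussianPDF 0 1)) := by
    rw [← h1]; infer_instance
  rw [stdGaussian]
  simp_rw [h1]
  rw [pi_withDensity_fin _ (ProbabilityTheory.measurable_gaussianPDF 0 1),
    map_withDensity_equiv _ _ (fun x : Fin m → ℝ => ∏ i, ProbabilityTheory.gaussianPDF 0 1 (x i))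
      (Finset.measurable_prod Finset.univ fun i _ =>
        (ProbabilityTheory.measurable_gaussianPDF 0 1).comp (measurable_pi_apply i)),
    show Measure.map (⇑(MeasurableEquiv.toLp 2 (Fin m → ℝ)))
      (Measure.pi fun _ : Fin m => (volume : Measure ℝ)) = volume by
      rw [← volume_pi]
      exact (MeasurePreserving.symm _
        (EuclideanSpace.volume_preserving_symm_measurableEquiv_toLp (Fin m))).map_eq]
  congr 1
  funext x
  have hcoord : ∀ i, ((MeasurableEquiv.toLp 2 (Fin m → ℝ)).symm x) i = x i :=
    fun i => rfl
  simp only [Function.comp]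
  have : ∏ i, ProbabilityTheory.gaussianPDF 0 1
      (((MeasurableEquiv.toLp 2 (Fin m → ℝ)).symm x) i)
      = ∏ i, ProbabilityTheory.gaussianPDF 0 1 (x i) := by
    exact Finset.prod_congr rfl fun i _ => by rw [hcoord]
  rw [this]
  unfold gaussDens
  simp_rw [ProbabilityTheory.gaussianPDF_def]
  rw [← ENNReal.ofReal_prod_of_nonneg]
  · congr 1
    simp_rw [ProbabilityTheory.gaussianPDFReal_def]
    push_cast
    rw [Finset.prod_mul_distrib, Finset.prod_const, ← Real.exp_sum]
    have hx : ‖x‖ ^ 2 = ∑ i, (x i) ^ 2 := by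
      rw [EuclideanSpace.norm_eq,
        Real.sq_sqrt (Finset.sum_nonneg fun i _ => sq_nonneg _)]
      exact Finset.sum_congr rfl fun i _ => by rw [Real.norm_eq_abs, sq_abs]
    have h2 : ∑ i, -(x i - 0) ^ 2 / (2 * (1 : ℝ)) = -‖x‖ ^ 2 / 2 := by
      rw [hx, neg_div, Finset.sum_div, ← Finset.sum_neg_distrib]
      exact Finset.sum_congr rfl fun i _ => by ring
    rw [h2]
    norm_num [Finset.card_univ]
  · exact fun i _ => ProbabilityTheory.gaussianPDFReal_nonneg 0 1 _

private lemma stdGaussian_map_isometry {m : ℕ}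
    (L : EuclideanSpace ℝ (Fin m) ≃ₗᵢ[ℝ] EuclideanSpace ℝ (Fin m)) :
    (stdGaussian m).map L = stdGaussian m := by
  rw [stdGaussian_eq_withDensity]
  have hL : (⇑L : EuclideanSpace ℝ (Fin m) → EuclideanSpace ℝ (Fin m))
      = ⇑(L.toHomeomorph.toMeasurableEquiv) := rfl
  rw [hL, map_withDensity_equiv _ _ (fun x => gaussDens m ‖x‖) ((measurable_gaussDens m).comp measurable_norm)]
  have hvol : Measure.map (⇑(L.toHomeomorph.toMeasurableEquiv)) volume
      = (volume : Measure (EuclideanSpace ℝ (Fin m))) := L.measurePreserving.map_eq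
  rw [hvol]
  congr 1
  funext x
  have : ‖(L.toHomeomorph.toMeasurableEquiv).symm x‖ = ‖x‖ := by
    have : (L.toHomeomorph.toMeasurableEquiv).symm x = L.symm x := rfl
    rw [this, L.symm.norm_map]
  simp only [Function.comp, this]

private lemma pi_map_eval {n : ℕ} (i : Fin n) :
    (Measure.pi fun _ : Fin n => ProbabilityTheory.gaussianReal 0 1).map
      (fun x => x i) = ProbabilityTheory.gaussianReal 0 1 := by
  ext s hs
  rw [Measure.map_apply (measurable_pi_apply i) hs]
  have hset : (fun x : Fin n → ℝ => x i) ⁻¹' s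
      = Set.univ.pi (fun j => if j = i then s else Set.univ) := by
    ext x
    simp only [Set.mem_preimage, Set.mem_univ_pi]
    constructor
    · intro h j
      by_cases hj : j = i
      · subst hj; simp [h]
      · simp [hj]
    · intro h
      have := h i
      simpa using this
  rw [hset, Measure.pi_pi]
  simp [apply_ite (ProbabilityTheory.gaussianReal 0 1), measure_univ]

private lemma stdGaussian_map_eval {m : ℕ} (i : Fin m) :
    (stdGaussian m).map (fun x => x i) = ProbabilityTheory.gaussianReal 0 1 := by
  rw [stdGaussian, Measure.map_map
    (show Measurable fun x : EuclideanSpace ℝ (Fin m) => x i from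
      (measurable_pi_apply i).comp (MeasurableEquiv.toLp 2 (Fin m → ℝ)).symm.measurable)
    (MeasurableEquiv.toLp 2 (Fin m → ℝ)).measurable]
  have hco : ((fun x : EuclideanSpace ℝ (Fin m) => x i) ∘
      ⇑(MeasurableEquiv.toLp 2 (Fin m → ℝ))) = fun x : Fin m → ℝ => x i := by
    funext x; rfl
  rw [hco]
  exact pi_map_eval i

open scoped RealInnerProductSpace in
private lemma stdGaussian_map_inner {m : ℕ} (u : EuclideanSpace ℝ (Fin m)) (hu : ‖u‖ = 1)
    (i0 : Fin m) :
    (stdGaussian m).map (fun z => ⟪u, z⟫) = ProbabilityTheory.gaussianReal 0 1 := by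
  have hortho : Orthonormal ℝ (Set.restrict {i0} (fun _ : Fin m => u)) := by
    constructor
    · intro j; exact hu
    · intro j k hjk
      exact absurd (Subtype.ext ((Set.mem_singleton_iff.mp j.2).trans
        (Set.mem_singleton_iff.mp k.2).symm)) hjk
  obtain ⟨b, hb⟩ := hortho.exists_orthonormalBasis_extension_of_card_eq
    (by simp)
  have hb0 : b i0 = u := hb i0 rfl
  have hfun : (fun z : EuclideanSpace ℝ (Fin m) => ⟪u, z⟫)
      = (fun x : EuclideanSpace ℝ (Fin m) => x i0) ∘ ⇑(b.repr) := by
    funext z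
    have := b.repr_apply_apply z i0
    simp only [Function.comp_apply]
    rw [this, hb0]
  rw [hfun, ← Measure.map_map
    (show Measurable fun x : EuclideanSpace ℝ (Fin m) => x i0 from
      (measurable_pi_apply i0).comp (MeasurableEquiv.toLp 2 (Fin m → ℝ)).symm.measurable)
    b.repr.continuous.measurable]
  rw [show Measure.map (⇑b.repr) (stdGaussian m) = stdGaussian m from
    stdGaussian_map_isometry b.repr]
  exact stdGaussian_map_eval i0

private lemma gaussianReal_Iio_neg (a : ℝ) :
    ProbabilityTheory.gaussianReal 0 1 (Set.Iio (-a)) =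
      ProbabilityTheory.gaussianReal 0 1 (Set.Ioi a) := by
  have hv : (⟨(-1 : ℝ) ^ 2, sq_nonneg _⟩ : NNReal) * 1 = 1 := by
    ext; norm_num
  have h1 : (ProbabilityTheory.gaussianReal 0 1).map (fun x => -1 * x)
      = ProbabilityTheory.gaussianReal 0 1 := by
    rw [ProbabilityTheory.gaussianReal_map_const_mul (-1)]
    congr 1
    · simp
  conv_lhs => rw [← h1]
  rw [Measure.map_apply (measurable_const_mul (-1)) measurableSet_Iio]
  congr 1
  ext x
  simp only [Set.mem_preimage, Set.mem_Iio, Set.mem_Ioi]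
  constructor <;> intro h <;> linarith


/-- The robust 0-1 error of the linear classifier `sign(wᵀ·)` on the
`K`-mode Gaussian mixture under the `ℓ2` adversarial budget of size `ε`, i.e. the
probability that `y wᵀx − ε‖w‖ < 0`, equals `Σ_k p_k Φ(r_k wᵀη/‖w‖ − ε)`. -/
theorem robust_error_gaussian_mixture {m K : ℕ}
    (η : EuclideanSpace ℝ (Fin m)) (hη : ‖η‖ = 1)
    (w : EuclideanSpace ℝ (Fin m)) (hw : w ≠ 0)
    (ε : ℝ) (hε : 0 ≤ ε)
    (p rr : Fin K → ℝ) (hp : ∀ k, 0 < p k) (hpsum : ∑ k, p k = 1)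
    (hr : ∀ k, 0 < rr k) :
    gmmMixture m K η p rr {q | q.2 * ⟪w, q.1⟫ - ε * ‖w‖ < 0} =
      ∑ k : Fin K, ENNReal.ofReal (p k) *
        ProbabilityTheory.gaussianReal 0 1 (Set.Ioi (rr k * ⟪w, η⟫ / ‖w‖ - ε)) := by
  unfold gmmMixture
  classical
  have hwpos : (0 : ℝ) < ‖w‖ := norm_pos_iff.mpr hw
  haveI hne : Nonempty (Fin m) := by
    by_contra h
    rw [not_nonempty_iff] at h
    exact hw (by ext i; exact (h.false i).elim)
  set u : EuclideanSpace ℝ (Fin m) := ‖w‖⁻¹ • w with hu_def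
  have hu : ‖u‖ = 1 := by
    rw [hu_def, norm_smul, Real.norm_eq_abs, abs_of_nonneg (inv_nonneg.mpr hwpos.le),
      inv_mul_cancel₀ hwpos.ne']
  have hmap := stdGaussian_map_inner u hu (Classical.arbitrary (Fin m))
  have hinner_w : ∀ z : EuclideanSpace ℝ (Fin m), ⟪w, z⟫ = ‖w‖ * ⟪u, z⟫ := by
    intro z
    rw [hu_def, real_inner_smul_left]
    field_simp
  have hinner_cont : Continuous fun z : EuclideanSpace ℝ (Fin m) => ⟪u, z⟫ :=
    continuous_const.inner continuous_id
  have hS : MeasurableSet {q : EuclideanSpace ℝ (Fin m) × ℝ | q.2 * ⟪w, q.1⟫ - ε * ‖w‖ < 0} := by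
    have hcont : Continuous fun q : EuclideanSpace ℝ (Fin m) × ℝ =>
        q.2 * ⟪w, q.1⟫ - ε * ‖w‖ :=
      ((continuous_snd.mul ((continuous_const.inner continuous_id).comp continuous_fst)).sub
        continuous_const)
    exact measurableSet_lt hcont.measurable measurable_const
  set c : ℝ := ⟪u, η⟫ with hc_def
  have hc_eq : ∀ k, rr k * c - ε = rr k * ⟪w, η⟫ / ‖w‖ - ε := by
    intro k
    rw [hc_def, hu_def, real_inner_smul_left]
    field_simp
  rw [Measure.finset_sum_apply]
  refine Finset.sum_congr rfl fun k _ => ?_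
  rw [Measure.smul_apply, Measure.add_apply, Measure.smul_apply, Measure.smul_apply,
    smul_eq_mul, smul_eq_mul, smul_eq_mul]
  have hmeas_plus : Measurable fun z : EuclideanSpace ℝ (Fin m) =>
      (rr k • η + z, (1 : ℝ)) :=
    (measurable_const.add measurable_id).prodMk measurable_const
  have hmeas_minus : Measurable fun z : EuclideanSpace ℝ (Fin m) =>
      ((-rr k) • η + z, (-1 : ℝ)) :=
    (measurable_const.add measurable_id).prodMk measurable_const
  have hplus : (stdGaussian m).map (fun z => (rr k • η + z, (1 : ℝ)))
      {q | q.2 * ⟪w, q.1⟫ - ε * ‖w‖ < 0}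
      = ProbabilityTheory.gaussianReal 0 1 (Set.Ioi (rr k * c - ε)) := by
    rw [Measure.map_apply hmeas_plus hS]
    have hset : ((fun z : EuclideanSpace ℝ (Fin m) => (rr k • η + z, (1 : ℝ))) ⁻¹'
        {q | q.2 * ⟪w, q.1⟫ - ε * ‖w‖ < 0})
        = (fun z => ⟪u, z⟫) ⁻¹' Set.Iio (ε - rr k * c) := by
      ext z
      simp only [Set.mem_preimage, Set.mem_setOf_eq, Set.mem_Iio, one_mul]
      rw [inner_add_right, real_inner_smul_right, hinner_w, hinner_w]
      rw [show ⟪u, η⟫ = c from rfl]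
      constructor <;> intro h <;> nlinarith
    rw [hset, ← Measure.map_apply hinner_cont.measurable measurableSet_Iio, hmap,
      show ε - rr k * c = -(rr k * c - ε) by ring, gaussianReal_Iio_neg]
  have hminus : (stdGaussian m).map (fun z => ((-rr k) • η + z, (-1 : ℝ)))
      {q | q.2 * ⟪w, q.1⟫ - ε * ‖w‖ < 0}
      = ProbabilityTheory.gaussianReal 0 1 (Set.Ioi (rr k * c - ε)) := by
    rw [Measure.map_apply hmeas_minus hS]
    have hset : ((fun z : EuclideanSpace ℝ (Fin m) => ((-rr k) • η + z, (-1 : ℝ))) ⁻¹'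
        {q | q.2 * ⟪w, q.1⟫ - ε * ‖w‖ < 0})
        = (fun z => ⟪u, z⟫) ⁻¹' Set.Ioi (rr k * c - ε) := by
      ext z
      simp only [Set.mem_preimage, Set.mem_setOf_eq, Set.mem_Ioi]
      rw [inner_add_right, real_inner_smul_right, hinner_w, hinner_w]
      rw [show ⟪u, η⟫ = c from rfl]
      constructor <;> intro h <;> nlinarith
    rw [hset, ← Measure.map_apply hinner_cont.measurable measurableSet_Ioi, hmap]
  rw [hplus, hminus, ← add_mul, ENNReal.inv_two_add_inv_two, one_mul, hc_eq k]
end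

section
/- Let y ∈ ℝⁿ, η ∈ ℝ^m, r ∈ ℝ, and Q ∈ ℝ^{n×m}, and set X = r y ηᵀ + Q ∈ ℝ^{n×m}. Define U = QQᵀ, d = Qη, s = yᵀU⁻¹y, t = dᵀU⁻¹d, v = yᵀU⁻¹d. Assume U and XXᵀ are invertible and D := r²s(‖η‖₂² − t) + (rv + 1)² ≠ 0. Then yᵀ(XXᵀ)⁻¹y = s / D. -/
open Matrix

private lemma vecMulVec_mulVec' {n m : ℕ} (a : Fin n → ℝ) (b : Fin m → ℝ) (x : Fin m → ℝ) :
    (Matrix.vecMulVec a b).mulVec x = (b ⬝ᵥ x) • a := by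
  ext i
  simp [Matrix.mulVec, Matrix.vecMulVec_apply, dotProduct, Finset.sum_mul,
    Finset.mul_sum, mul_assoc, mul_comm, mul_left_comm]

private lemma transpose_vecMulVec' {n m : ℕ} (a : Fin n → ℝ) (b : Fin m → ℝ) :
    (Matrix.vecMulVec a b)ᵀ = Matrix.vecMulVec b a := by
  ext i j
  simp [Matrix.vecMulVec_apply, mul_comm]

private lemma vecMulVec_mul_vecMulVec' {n m k : ℕ} (a : Fin n → ℝ) (b : Fin m → ℝ)
    (c : Fin m → ℝ) (e : Fin k → ℝ) :
    Matrix.vecMulVec a b * Matrix.vecMulVec c e = (b ⬝ᵥ c) • Matrix.vecMulVec a e := by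
  ext i j
  simp [Matrix.mul_apply, Matrix.vecMulVec_apply, dotProduct, Finset.sum_mul,
    Finset.mul_sum]
  apply Finset.sum_congr rfl
  intro x _; ring

private lemma vecMulVec_mul_right' {n m k : ℕ} (a : Fin n → ℝ) (b : Fin m → ℝ)
    (M : Matrix (Fin m) (Fin k) ℝ) :
    Matrix.vecMulVec a b * M = Matrix.vecMulVec a (M.vecMul b) := by
  ext i j
  simp [Matrix.mul_apply, Matrix.vecMulVec_apply, Matrix.vecMul, dotProduct,
    Finset.mul_sum, mul_assoc]

private lemma mul_vecMulVec' {n m k : ℕ} (M : Matrix (Fin n) (Fin m) ℝ) (b : Fin m → ℝ)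
    (c : Fin k → ℝ) :
    M * Matrix.vecMulVec b c = Matrix.vecMulVec (M.mulVec b) c := by
  ext i j
  simp [Matrix.mul_apply, Matrix.vecMulVec_apply, Matrix.mulVec, dotProduct,
    Finset.sum_mul, mul_assoc]

/-- `yᵀ(XXᵀ)⁻¹y = s / D` where `X = r y ηᵀ + Q`. -/
theorem quadratic_form_inverse_eq {n m : ℕ}
    (y : Fin n → ℝ) (η : Fin m → ℝ) (r : ℝ) (Q : Matrix (Fin n) (Fin m) ℝ)
    (X : Matrix (Fin n) (Fin m) ℝ) (hX : X = r • Matrix.vecMulVec y η + Q)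
    (U : Matrix (Fin n) (Fin n) ℝ) (hU : U = Q * Qᵀ)
    (d : Fin n → ℝ) (hd : d = Q.mulVec η)
    (s : ℝ) (hs : s = y ⬝ᵥ U⁻¹.mulVec y)
    (t : ℝ) (ht : t = d ⬝ᵥ U⁻¹.mulVec d)
    (v : ℝ) (hv : v = y ⬝ᵥ U⁻¹.mulVec d)
    (hUinv : IsUnit U.det) (hXXtinv : IsUnit (X * Xᵀ).det)
    (D : ℝ) (hDdef : D = r ^ 2 * s * (η ⬝ᵥ η - t) + (r * v + 1) ^ 2) (hD : D ≠ 0) :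
    y ⬝ᵥ (X * Xᵀ)⁻¹.mulVec y = s / D := by
  set c1 : ℝ := (r * v + 1) / D with hc1
  set c2 : ℝ := -(r * s) / D with hc2
  set w : Fin n → ℝ := c1 • U⁻¹.mulVec y + c2 • U⁻¹.mulVec d with hw
  -- U is symmetric hence so is its inverse
  have hUsym : Uᵀ = U := by rw [hU, transpose_mul, transpose_transpose]
  have hUisym : U⁻¹ᵀ = U⁻¹ := by rw [transpose_nonsing_inv, hUsym]
  have hUy : U.mulVec (U⁻¹.mulVec y) = y := by
    rw [mulVec_mulVec, Matrix.mul_nonsing_inv _ hUinv, one_mulVec]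
  have hUd : U.mulVec (U⁻¹.mulVec d) = d := by
    rw [mulVec_mulVec, Matrix.mul_nonsing_inv _ hUinv, one_mulVec]
  have hdUy : d ⬝ᵥ U⁻¹.mulVec y = v := by
    rw [Matrix.dotProduct_mulVec, ← Matrix.mulVec_transpose, hUisym, hv,
      dotProduct_comm, Matrix.dotProduct_mulVec, ← Matrix.mulVec_transpose, hUisym]
  -- expansion of X Xᵀ
  have hXX : X * Xᵀ = (r ^ 2 * (η ⬝ᵥ η)) • Matrix.vecMulVec y y
      + r • Matrix.vecMulVec y d + r • Matrix.vecMulVec d y + U := by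
    have hQη : Qᵀ.vecMul η = d := by
      rw [Matrix.vecMul_transpose, hd]
    rw [hX, transpose_add, transpose_smul, transpose_vecMulVec', Matrix.add_mul, Matrix.mul_add,
      Matrix.mul_add, Matrix.smul_mul, Matrix.smul_mul, Matrix.mul_smul, Matrix.mul_smul,
      vecMulVec_mul_vecMulVec', vecMulVec_mul_right', mul_vecMulVec', hQη, ← hd, ← hU,
      smul_smul, smul_smul]
    ring_nf
    abel
  -- key: (X Xᵀ) w = y
  have hyw : y ⬝ᵥ w = c1 * s + c2 * v := by
    rw [hw]
    simp [dotProduct_add, dotProduct_smul, ← hs, ← hv, smul_eq_mul]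
  have hdw : d ⬝ᵥ w = c1 * v + c2 * t := by
    rw [hw]
    simp [dotProduct_add, dotProduct_smul, hdUy, ← ht, smul_eq_mul]
  have key : (X * Xᵀ).mulVec w = y := by
    rw [hXX]
    rw [Matrix.add_mulVec, Matrix.add_mulVec, Matrix.add_mulVec, Matrix.smul_mulVec,
      Matrix.smul_mulVec, Matrix.smul_mulVec, vecMulVec_mulVec',
      vecMulVec_mulVec', vecMulVec_mulVec', hyw, hdw]
    have hUw : U.mulVec w = c1 • y + c2 • d := by
      rw [hw, Matrix.mulVec_add, Matrix.mulVec_smul, Matrix.mulVec_smul, hUy, hUd]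
    rw [hUw]
    have e1 : r ^ 2 * (η ⬝ᵥ η) * (c1 * s + c2 * v) + r * (c1 * v + c2 * t) + c1 = 1 := by
      rw [hc1, hc2]
      field_simp
      rw [hDdef]; ring
    have e2 : r * (c1 * s + c2 * v) + c2 = 0 := by
      rw [hc1, hc2]
      field_simp
      ring
    have : ((r ^ 2 * (η ⬝ᵥ η) * (c1 * s + c2 * v) + r * (c1 * v + c2 * t) + c1) • y)
        + ((r * (c1 * s + c2 * v) + c2) • d) = y := by
      rw [e1, e2, one_smul, zero_smul, add_zero]
    calc (r ^ 2 * (η ⬝ᵥ η)) • (c1 * s + c2 * v) • y + r • (c1 * v + c2 * t) • y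
          + r • (c1 * s + c2 * v) • d + (c1 • y + c2 • d)
        = ((r ^ 2 * (η ⬝ᵥ η) * (c1 * s + c2 * v) + r * (c1 * v + c2 * t) + c1) • y)
          + ((r * (c1 * s + c2 * v) + c2) • d) := by
          module
      _ = y := this
  have hinv : (X * Xᵀ)⁻¹.mulVec y = w := by
    rw [← key, mulVec_mulVec, Matrix.nonsing_inv_mul _ hXXtinv, one_mulVec]
  rw [hinv, hyw, hc1, hc2]
  field_simp
  ring
end

section
/- Let y ∈ ℝⁿ, η ∈ ℝ^m, r ∈ ℝ, and Q ∈ ℝ^{n×m}, and set X = r y ηᵀ + Q ∈ ℝ^{n×m}. Define U = QQᵀ, d = Qη, s = yᵀU⁻¹y, t = dᵀU⁻¹d, v = yᵀU⁻¹d. Assume U and XXᵀ are invertible, s ≠ 0, and D := r²s(‖η‖₂² − t) + (rv + 1)² ≠ 0. Let w = Xᵀ(XXᵀ)⁻¹y be the minimum-norm interpolator and A = wᵀη/‖w‖₂ (so A² = (yᵀ(XXᵀ)⁻¹Xη)² / (yᵀ(XXᵀ)⁻¹y)). Then A² = ( r s(‖η‖₂² − t) + r v² + v )² / ( s · D ),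 and moreover A² = (s(‖η‖₂² − t) + v²)/s − (‖η‖₂² − t)/D. -/
open Matrix


private lemma vmv_mulVec {n m : ℕ} (y : Fin n → ℝ) (η : Fin m → ℝ) (x : Fin m → ℝ) :
    (vecMulVec y η).mulVec x = (η ⬝ᵥ x) • y := by
  ext i
  simp only [vecMulVec_apply, mulVec, dotProduct, Pi.smul_apply, smul_eq_mul, Finset.sum_mul]
  exact Finset.sum_congr rfl fun j _ => by ring

private lemma dot_transpose_mulVec {n m : ℕ} (Q : Matrix (Fin n) (Fin m) ℝ)
    (x : Fin n → ℝ) (η : Fin m → ℝ) :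
    η ⬝ᵥ Qᵀ.mulVec x = (Q.mulVec η) ⬝ᵥ x := by
  rw [dotProduct_mulVec, vecMul_transpose]

private lemma alg_coef1 (r c s v t D : ℝ) (hD : D ≠ 0)
    (hDdef : D = r ^ 2 * s * (c - t) + (r * v + 1) ^ 2) :
    r * (r * ((1 + r * v) / D * s + -(r * s) / D * v) * c +
      ((1 + r * v) / D * v + -(r * s) / D * t)) + (1 + r * v) / D = 1 := by
  field_simp
  rw [hDdef]; ring

private lemma alg_coef2 (r s v D : ℝ) (hD : D ≠ 0) :
    r * ((1 + r * v) / D * s + -(r * s) / D * v) + -(r * s) / D = 0 := by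
  field_simp; ring

private lemma alg_yz (r s v D : ℝ) (hD : D ≠ 0) :
    (1 + r * v) / D * s + -(r * s) / D * v = s / D := by
  field_simp; ring

private lemma alg_wη (r c s v t D : ℝ) (hD : D ≠ 0) :
    r * c * ((1 + r * v) / D * s + -(r * s) / D * v) +
      ((1 + r * v) / D * v + -(r * s) / D * t)
    = (r * s * (c - t) + r * v ^ 2 + v) / D := by
  field_simp; ring

private lemma alg_final (r c s v t D : ℝ) (hs : s ≠ 0) (hD : D ≠ 0)
    (hDdef : D = r ^ 2 * s * (c - t) + (r * v + 1) ^ 2) :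
    ((r * s * (c - t) + r * v ^ 2 + v) / D) ^ 2 / (s / D)
      = (r * s * (c - t) + r * v ^ 2 + v) ^ 2 / (s * D) ∧
    (r * s * (c - t) + r * v ^ 2 + v) ^ 2 / (s * D)
      = (s * (c - t) + v ^ 2) / s - (c - t) / D := by
  constructor
  · field_simp
  · subst hDdef
    field_simp
    ring

/-- For the minimum-norm interpolator `w = Xᵀ(XXᵀ)⁻¹y` with
`X = r y ηᵀ + Q` and `A = wᵀη/‖w‖₂`, we have
`A² = (r s (‖η‖²−t) + r v² + v)² / (s D)` and
`A² = (s(‖η‖²−t) + v²)/s − (‖η‖²−t)/D`. -/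
theorem min_norm_interpolator_margin_sq {n m : ℕ}
    (y : Fin n → ℝ) (η : Fin m → ℝ) (r : ℝ) (Q : Matrix (Fin n) (Fin m) ℝ)
    (X : Matrix (Fin n) (Fin m) ℝ) (hX : X = r • Matrix.vecMulVec y η + Q)
    (U : Matrix (Fin n) (Fin n) ℝ) (hU : U = Q * Qᵀ)
    (d : Fin n → ℝ) (hd : d = Q.mulVec η)
    (s : ℝ) (hs : s = y ⬝ᵥ U⁻¹.mulVec y)
    (t : ℝ) (ht : t = d ⬝ᵥ U⁻¹.mulVec d)
    (v : ℝ) (hv : v = y ⬝ᵥ U⁻¹.mulVec d)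
    (hUinv : IsUnit U.det) (hXXtinv : IsUnit (X * Xᵀ).det) (hs0 : s ≠ 0)
    (D : ℝ) (hDdef : D = r ^ 2 * s * (η ⬝ᵥ η - t) + (r * v + 1) ^ 2) (hD : D ≠ 0)
    (w : Fin m → ℝ) (hw : w = Xᵀ.mulVec ((X * Xᵀ)⁻¹.mulVec y))
    (A : ℝ) (hA : A = (w ⬝ᵥ η) / Real.sqrt (w ⬝ᵥ w)) :
    A ^ 2 = (r * s * (η ⬝ᵥ η - t) + r * v ^ 2 + v) ^ 2 / (s * D) ∧
    A ^ 2 = (s * (η ⬝ᵥ η - t) + v ^ 2) / s - (η ⬝ᵥ η - t) / D := by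
  set c : ℝ := η ⬝ᵥ η with hc
  set α : ℝ := (1 + r * v) / D with hα
  set β : ℝ := -(r * s) / D with hβ
  set z : Fin n → ℝ := α • U⁻¹.mulVec y + β • U⁻¹.mulVec d with hz
  have hUy : U.mulVec (U⁻¹.mulVec y) = y := by
    rw [mulVec_mulVec, mul_nonsing_inv _ hUinv, one_mulVec]
  have hUd : U.mulVec (U⁻¹.mulVec d) = d := by
    rw [mulVec_mulVec, mul_nonsing_inv _ hUinv, one_mulVec]
  have hyz : y ⬝ᵥ z = α * s + β * v := by
    simp [hz, dotProduct_add, dotProduct_smul, hs, hv, smul_eq_mul]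
  have hdz : d ⬝ᵥ z = α * v + β * t := by
    have hUsym : Uᵀ = U := by rw [hU, transpose_mul, transpose_transpose]
    have hUinvsym : (U⁻¹)ᵀ = U⁻¹ := by rw [transpose_nonsing_inv, hUsym]
    have h1 : d ⬝ᵥ U⁻¹.mulVec y = v := by
      rw [hv, dotProduct_mulVec,
        show d ᵥ* U⁻¹ = U⁻¹ *ᵥ d from by
          rw [← hUinvsym, vecMul_transpose, hUinvsym],
        dotProduct_comm]
    simp [hz, dotProduct_add, dotProduct_smul, h1, ht, smul_eq_mul]
  have hηz : η ⬝ᵥ Xᵀ.mulVec z = r * c * (y ⬝ᵥ z) + d ⬝ᵥ z := by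
    rw [hX, transpose_add, transpose_smul, add_mulVec, smul_mulVec]
    rw [dotProduct_add, dotProduct_smul]
    have hev : (vecMulVec y η)ᵀ = vecMulVec η y := by
      ext i j; simp [vecMulVec_apply, transpose_apply, mul_comm]
    rw [hev, vmv_mulVec, dot_transpose_mulVec, ← hd]
    simp only [smul_eq_mul, dotProduct_smul, ← hc]
    try ring
  have hXXz : (X * Xᵀ).mulVec z = y := by
    have hXt : Xᵀ.mulVec z = (r * (y ⬝ᵥ z)) • η + Qᵀ.mulVec z := by
      rw [hX, transpose_add, transpose_smul, add_mulVec, smul_mulVec]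
      have hev : (vecMulVec y η)ᵀ = vecMulVec η y := by
        ext i j; simp [vecMulVec_apply, transpose_apply, mul_comm]
      rw [hev, vmv_mulVec, smul_smul]
    rw [← mulVec_mulVec, hXt]
    have hXmul : X.mulVec ((r * (y ⬝ᵥ z)) • η + Qᵀ.mulVec z)
        = (r * (η ⬝ᵥ ((r * (y ⬝ᵥ z)) • η + Qᵀ.mulVec z))) • y
          + Q.mulVec ((r * (y ⬝ᵥ z)) • η + Qᵀ.mulVec z) := by
      rw [hX, add_mulVec, smul_mulVec, vmv_mulVec, smul_smul]
    rw [hXmul]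
    have hη2 : η ⬝ᵥ ((r * (y ⬝ᵥ z)) • η + Qᵀ.mulVec z) = r * (y ⬝ᵥ z) * c + d ⬝ᵥ z := by
      rw [dotProduct_add, dotProduct_smul, dot_transpose_mulVec, ← hd, smul_eq_mul, ← hc]
    have hQ2 : Q.mulVec ((r * (y ⬝ᵥ z)) • η + Qᵀ.mulVec z)
        = (r * (y ⬝ᵥ z)) • d + U.mulVec z := by
      rw [mulVec_add, mulVec_smul, ← hd, hU, ← mulVec_mulVec]
    rw [hη2, hQ2, hyz, hdz]
    have hUz : U.mulVec z = α • y + β • d := by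
      simp [hz, mulVec_add, mulVec_smul, hUy, hUd]
    rw [hUz]
    have hαval : r * (r * (α * s + β * v) * c + (α * v + β * t)) + α = 1 := by
      rw [hα, hβ]; exact alg_coef1 r c s v t D hD hDdef
    have hβval : r * (α * s + β * v) + β = 0 := by
      rw [hα, hβ]; exact alg_coef2 r s v D hD
    ext i
    simp only [Pi.add_apply, Pi.smul_apply, smul_eq_mul]
    linear_combination (y i) * hαval + (d i) * hβval
  have hzinv : (X * Xᵀ)⁻¹.mulVec y = z := by
    rw [← hXXz, mulVec_mulVec, nonsing_inv_mul _ hXXtinv, one_mulVec]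
  have hww : w ⬝ᵥ w = y ⬝ᵥ z := by
    nth_rewrite 2 [hw]
    rw [hzinv, dot_transpose_mulVec, hw, hzinv, mulVec_mulVec, hXXz]
  have hwη : w ⬝ᵥ η = η ⬝ᵥ Xᵀ.mulVec z := by
    rw [hw, hzinv, dotProduct_comm]
  have hyzval : y ⬝ᵥ z = s / D := by
    rw [hyz, hα, hβ]; exact alg_yz r s v D hD
  have hwηval : w ⬝ᵥ η = (r * s * (c - t) + r * v ^ 2 + v) / D := by
    rw [hwη, hηz, hyz, hdz, hα, hβ]; exact alg_wη r c s v t D hD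
  have hwwnn : 0 ≤ w ⬝ᵥ w := by
    rw [show w ⬝ᵥ w = ∑ i, w i * w i from rfl]
    exact Finset.sum_nonneg fun i _ => mul_self_nonneg _
  have hA2 : A ^ 2 = (w ⬝ᵥ η) ^ 2 / (w ⬝ᵥ w) := by
    rw [hA, div_pow, Real.sq_sqrt hwwnn]
  rw [hA2, hwηval, hww, hyzval]
  have hfin := alg_final r c s v t D hs0 hD hDdef
  exact ⟨hfin.1, hfin.1.trans hfin.2⟩
end

section
/- Let p_1, …, p_K > 0 with Σ_k p_k = 1 and r_1 < r_2 < … < r_K be positive reals. Let g : (0, ∞) → ℝ be differentiable with g'(r) > 0 for all r, and define R(r, ε) = Σ_{k=1}^K p_k Φ( r_k g(r) − ε ), where Φ(u) = P(Z > u) for Z ∼ N(0,1). Let 0 ≤ ε₁ < ε₂ and let 1 ≤ i < j ≤ K; assume separability under the larger budget along the interval: r_k g(r) − ε₂ > 0 for all k = 1, …, K and all r ∈ [r_i, r_j]. Then R(r_i, ε₁) − R(r_j, ε₁) < R(r_i, ε₂) − R(r_j, ε₂). -/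
open scoped BigOperators

open MeasureTheory ProbabilityTheory Real

/-- The standard Gaussian tail function `Φ(u) = P(Z > u)`, `Z ∼ N(0,1)`. -/
noncomputable def gaussTail (u : ℝ) : ℝ :=
  (ProbabilityTheory.gaussianReal 0 1 (Set.Ioi u)).toReal

lemma gaussTail_eq (u : ℝ) :
    gaussTail u = ∫ x in Set.Ioi u, gaussianPDFReal 0 1 x := by
  rw [gaussTail, gaussianReal_apply_eq_integral 0 one_ne_zero,
    ENNReal.toReal_ofReal (integral_nonneg fun x => gaussianPDFReal_nonneg 0 1 x)]

lemma gaussTail_sub (u v : ℝ) (h : u ≤ v) :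
    gaussTail u - gaussTail v = ∫ x in u..v, gaussianPDFReal 0 1 x := by
  have hint : Integrable (gaussianPDFReal 0 1) := integrable_gaussianPDFReal 0 1
  rw [gaussTail_eq, gaussTail_eq, intervalIntegral.integral_of_le h,
    ← Set.Ioc_union_Ioi_eq_Ioi h,
    setIntegral_union (Set.Ioc_disjoint_Ioi le_rfl) measurableSet_Ioi
      hint.integrableOn hint.integrableOn]
  ring

lemma continuous_gaussPDF : Continuous (gaussianPDFReal 0 1) := by
  unfold gaussianPDFReal
  fun_prop

lemma gaussPDF_add_lt (x d : ℝ) (hx : 0 ≤ x) (hd : 0 < d) :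
    gaussianPDFReal 0 1 (x + d) < gaussianPDFReal 0 1 x := by
  unfold gaussianPDFReal
  have hpos : (0 : ℝ) < (√(2 * π * (1 : NNReal)))⁻¹ := by
    have : (0 : ℝ) < π := Real.pi_pos
    positivity
  refine mul_lt_mul_of_pos_left (Real.exp_lt_exp.mpr ?_) hpos
  have h2 : (2 * ((1 : NNReal) : ℝ)) = 2 := by norm_num
  rw [h2, sub_zero, sub_zero, div_lt_div_iff_of_pos_right (by norm_num : (0:ℝ) < 2)]
  nlinarith

lemma key_gap (A B ε₁ ε₂ : ℝ) (hAB : A < B) (hA : 0 < A - ε₂) (hε : ε₁ < ε₂) :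
    gaussTail (A - ε₁) - gaussTail (A - ε₂) < gaussTail (B - ε₁) - gaussTail (B - ε₂) := by
  have h1 : gaussTail (A - ε₂) - gaussTail (A - ε₁)
      = ∫ x in (A - ε₂)..(A - ε₁), gaussianPDFReal 0 1 x :=
    gaussTail_sub _ _ (by linarith)
  have h2 : gaussTail (B - ε₂) - gaussTail (B - ε₁)
      = ∫ x in (B - ε₂)..(B - ε₁), gaussianPDFReal 0 1 x :=
    gaussTail_sub _ _ (by linarith)
  have hshift : (∫ x in (B - ε₂)..(B - ε₁), gaussianPDFReal 0 1 x)
      = ∫ x in (A - ε₂)..(A - ε₁), gaussianPDFReal 0 1 (x + (B - A)) := by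
    rw [intervalIntegral.integral_comp_add_right (gaussianPDFReal 0 1) (B - A),
      show A - ε₂ + (B - A) = B - ε₂ by ring, show A - ε₁ + (B - A) = B - ε₁ by ring]
  have hineq : (∫ x in (A - ε₂)..(A - ε₁), gaussianPDFReal 0 1 (x + (B - A)))
      < ∫ x in (A - ε₂)..(A - ε₁), gaussianPDFReal 0 1 x := by
    refine intervalIntegral.integral_lt_integral_of_continuousOn_of_le_of_exists_lt
      (by linarith) ((continuous_gaussPDF.comp (by fun_prop)).continuousOn)
      continuous_gaussPDF.continuousOn ?_ ?_
    · intro x hx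
      exact (gaussPDF_add_lt x (B - A) (by have := hx.1; linarith) (by linarith)).le
    · exact ⟨A - ε₁, ⟨by linarith, le_rfl⟩,
        gaussPDF_add_lt _ (B - A) (by linarith) (by linarith)⟩
  linarith [hshift ▸ hineq]

/-- The gap in robust test error between models trained on hard
instances (`r_i`) and easy instances (`r_j`) increases with the adversarial budget:
if `ε₁ < ε₂` (with separability under the larger budget on `[r_i, r_j]`), then
`R(r_i, ε₁) − R(r_j, ε₁) < R(r_i, ε₂) − R(r_j, ε₂)`. -/
theorem robust_error_gap_increases_with_budget
    {K : ℕ} (p rr : Fin K → ℝ)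
    (hp : ∀ k, 0 < p k) (hpsum : ∑ k, p k = 1)
    (hrpos : ∀ k, 0 < rr k) (hrmono : StrictMono rr)
    (g : ℝ → ℝ) (hgdiff : ∀ r : ℝ, 0 < r → DifferentiableAt ℝ g r)
    (hg' : ∀ r : ℝ, 0 < r → 0 < deriv g r)
    (ε₁ ε₂ : ℝ) (hε₁ : 0 ≤ ε₁) (hε : ε₁ < ε₂)
    (i j : Fin K) (hij : i < j)
    (hsep : ∀ k, ∀ r ∈ Set.Icc (rr i) (rr j), 0 < rr k * g r - ε₂) :
    (∑ k, p k * gaussTail (rr k * g (rr i) - ε₁)) -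
        (∑ k, p k * gaussTail (rr k * g (rr j) - ε₁)) <
      (∑ k, p k * gaussTail (rr k * g (rr i) - ε₂)) -
        (∑ k, p k * gaussTail (rr k * g (rr j) - ε₂)) := by
  have hrij : rr i < rr j := hrmono hij
  have hgm : g (rr i) < g (rr j) := by
    have hmono : StrictMonoOn g (Set.Icc (rr i) (rr j)) := by
      refine strictMonoOn_of_deriv_pos (convex_Icc _ _) ?_ ?_
      · exact fun x hx =>
          (hgdiff x (lt_of_lt_of_le (hrpos i) hx.1)).continuousAt.continuousWithinAt
      · intro x hx
        rw [interior_Icc] at hx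
        exact hg' x (lt_trans (hrpos i) hx.1)
    exact hmono ⟨le_rfl, hrij.le⟩ ⟨hrij.le, le_rfl⟩ hrij
  haveI : Nonempty (Fin K) := ⟨i⟩
  rw [← Finset.sum_sub_distrib, ← Finset.sum_sub_distrib]
  refine Finset.sum_lt_sum_of_nonempty Finset.univ_nonempty ?_
  intro k _
  have hA : 0 < rr k * g (rr i) - ε₂ := hsep k (rr i) ⟨le_rfl, hrij.le⟩
  have hAB : rr k * g (rr i) < rr k * g (rr j) :=
    mul_lt_mul_of_pos_left hgm (hrpos k)
  have hk := key_gap (rr k * g (rr i)) (rr k * g (rr j)) ε₁ ε₂ hAB hA hε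
  rw [← mul_sub, ← mul_sub]
  exact mul_lt_mul_of_pos_left (by linarith) (hp k)
end
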